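/- Define the polynomial p(b) = (1 + 5b − b⁵)/4 − 2·((1 + 5b + 10b² − 5b⁴ − b⁵)/12)². Then p has exactly one zero b₀ in the interval [0,1]; moreover b₀ ∈ (0.826, 0.827), p(b) > 0 for 0 ≤ b < b₀, and p(b) < 0 for b₀ < b ≤ 1. -/

import Mathlib

open Set

/-- The polynomial `p(b) = (1 + 5b − b⁵)/4 − 2((1 + 5b + 10b² − 5b⁴ − b⁵)/12)²`,
i.e. `h(1) − 2k(1)²` for the family of octagonal bodies of revolution `K_b`. -/
noncomputable def pOct (b : ℝ) : ℝ :=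
  (1 + 5 * b - b ^ 5) / 4 - 2 * ((1 + 5 * b + 10 * b ^ 2 - 5 * b ^ 4 - b ^ 5) / 12) ^ 2

noncomputable def pOct' (b : ℝ) : ℝ :=
  (5 - 5 * b ^ 4) / 4 -
    (1 + 5 * b + 10 * b ^ 2 - 5 * b ^ 4 - b ^ 5) * (5 + 20 * b - 20 * b ^ 3 - 5 * b ^ 4) / 36

lemma hasDerivAt_pOct (x : ℝ) : HasDerivAt pOct (pOct' x) x := by
  have h1 : HasDerivAt (fun b : ℝ => (1 : ℝ) + 5 * b - b ^ 5) (5 - 5 * x ^ 4) x := by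
    have := (((hasDerivAt_id x).const_mul (5:ℝ)).const_add 1).sub (hasDerivAt_pow 5 x)
    refine this.congr_deriv ?_
    push_cast; ring
  have h2 : HasDerivAt (fun b : ℝ => (1 : ℝ) + 5 * b + 10 * b ^ 2 - 5 * b ^ 4 - b ^ 5)
      (5 + 20 * x - 20 * x ^ 3 - 5 * x ^ 4) x := by
    have := ((((((hasDerivAt_id x).const_mul (5:ℝ)).const_add 1).add
      ((hasDerivAt_pow 2 x).const_mul (10:ℝ))).sub
      ((hasDerivAt_pow 4 x).const_mul (5:ℝ))).sub (hasDerivAt_pow 5 x))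
    refine this.congr_deriv ?_
    push_cast; ring
  have h := (h1.div_const 4).sub ((((h2.div_const 12).pow 2).const_mul (2:ℝ)))
  refine h.congr_deriv ?_
  unfold pOct'
  push_cast; ring

lemma pOct_pos_small : ∀ b : ℝ, 0 ≤ b → b ≤ 0.4 → 0 < pOct b := by
  intro b h0 h1
  have hb2 : 0 ≤ b ^ 2 := sq_nonneg b
  have hb3 : 0 ≤ b ^ 3 := pow_nonneg h0 3
  have hb4 : 0 ≤ b ^ 4 := pow_nonneg h0 4
  have hb5 : 0 ≤ b ^ 5 := pow_nonneg h0 5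
  have hu1 : 1 + 5 * b + 10 * b ^ 2 - 5 * b ^ 4 - b ^ 5 ≤ 1 + 5 * b + 10 * b ^ 2 := by
    linarith
  have hu0 : (0:ℝ) ≤ 1 + 5 * b + 10 * b ^ 2 - 5 * b ^ 4 - b ^ 5 := by nlinarith
  have hsq : (1 + 5 * b + 10 * b ^ 2 - 5 * b ^ 4 - b ^ 5) ^ 2
      ≤ (1 + 5 * b + 10 * b ^ 2) ^ 2 := by nlinarith
  have hq : (1 + 5 * b + 10 * b ^ 2) ^ 2 < 18 * (1 + 5 * b - b ^ 5) := by
    nlinarith [mul_nonneg h0 h0, mul_nonneg (mul_nonneg h0 h0) h0,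
      mul_nonneg (mul_nonneg (mul_nonneg h0 h0) h0) h0, sq_nonneg (b - 0.4)]
  unfold pOct
  nlinarith [hsq, hq]

lemma pOct_anti : StrictAntiOn pOct (Icc (0.4 : ℝ) 1) := by
  apply strictAntiOn_of_deriv_neg (convex_Icc _ _)
  · apply Continuous.continuousOn
    unfold pOct
    continuity
  · intro x hx
    rw [interior_Icc] at hx
    obtain ⟨hx0, hx1⟩ := hx
    rw [(hasDerivAt_pOct x).deriv]
    have hw : 0 < (1 + 5 * x + 10 * x ^ 2 - 5 * x ^ 4 - x ^ 5) * (x ^ 2 + 4 * x + 1)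
        - 9 * (1 + x ^ 2) := by
      nlinarith [sq_nonneg x, sq_nonneg (x - 0.4), sq_nonneg (x - 1), pow_nonneg (le_of_lt (lt_trans (by norm_num) hx0)) 3, sq_nonneg (x*x - x)]
    have heq : pOct' x = -(5 * (1 - x) * (1 + x) *
        ((1 + 5 * x + 10 * x ^ 2 - 5 * x ^ 4 - x ^ 5) * (x ^ 2 + 4 * x + 1)
          - 9 * (1 + x ^ 2))) / 36 := by
      unfold pOct'; ring
    rw [heq]
    have h1 : (0:ℝ) < 1 - x := by linarith
    have h2 : (0:ℝ) < 1 + x := by linarith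
    have hprod : 0 < 5 * (1 - x) * (1 + x) *
        ((1 + 5 * x + 10 * x ^ 2 - 5 * x ^ 4 - x ^ 5) * (x ^ 2 + 4 * x + 1)
          - 9 * (1 + x ^ 2)) := by positivity
    linarith [div_pos hprod (by norm_num : (0:ℝ) < 36)]

/-- `p` has exactly one zero `b₀` in `[0,1]`; moreover `b₀ ∈ (0.826, 0.827)`,
`p(b) > 0` for `0 ≤ b < b₀`, and `p(b) < 0` for `b₀ < b ≤ 1`. -/
theorem pOct_unique_zero :
    ∃ b₀ : ℝ, b₀ ∈ Icc (0 : ℝ) 1 ∧ pOct b₀ = 0 ∧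
      (∀ b ∈ Icc (0 : ℝ) 1, pOct b = 0 → b = b₀) ∧
      b₀ ∈ Ioo (0.826 : ℝ) 0.827 ∧
      (∀ b : ℝ, 0 ≤ b → b < b₀ → 0 < pOct b) ∧
      (∀ b : ℝ, b₀ < b → b ≤ 1 → pOct b < 0) := by
  have hcont : Continuous pOct := by unfold pOct; continuity
  have hpa : (0:ℝ) < pOct 0.826 := by unfold pOct; norm_num
  have hpb : pOct 0.827 < 0 := by unfold pOct; norm_num
  have hsub : Ioo (pOct 0.827) (pOct 0.826) ⊆ pOct '' Ioo (0.826 : ℝ) 0.827 :=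
    intermediate_value_Ioo' (by norm_num) hcont.continuousOn
  obtain ⟨b₀, hb₀mem, hb₀⟩ := hsub ⟨hpb, hpa⟩
  obtain ⟨hb₀l, hb₀r⟩ := hb₀mem
  have hb₀Icc : b₀ ∈ Icc (0.4:ℝ) 1 := ⟨by linarith, by linarith⟩
  have hpos : ∀ b : ℝ, 0 ≤ b → b < b₀ → 0 < pOct b := by
    intro b h0 hlt
    rcases le_or_gt b 0.4 with h | h
    · exact pOct_pos_small b h0 h
    · have := pOct_anti ⟨le_of_lt h, by linarith⟩ hb₀Icc hlt
      rw [hb₀] at this; exact this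
  have hneg : ∀ b : ℝ, b₀ < b → b ≤ 1 → pOct b < 0 := by
    intro b hlt h1
    have := pOct_anti hb₀Icc ⟨by linarith, h1⟩ hlt
    rw [hb₀] at this; exact this
  refine ⟨b₀, ⟨by linarith, by linarith⟩, hb₀, ?_, ⟨hb₀l, hb₀r⟩, hpos, hneg⟩
  intro b hb hpb0
  rcases lt_trichotomy b b₀ with h | h | h
  · exact absurd hpb0 (ne_of_gt (hpos b hb.1 h))
  · exact h
  · exact absurd hpb0 (ne_of_lt (hneg b h hb.2))
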